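/- Let G be a 2-edge-connected graph, w̄ : E(G) → ℝ≥0 a weight function, and k a real number. Let Q_G be the quotient of G by the equivalence relation u ∼ v iff λ_G(u,v) ≥ 3, with induced weight function w on E(Q_G). Then G can be made 3-edge-connected by doubling a set F̄ of edges with w̄(F̄) ≤ k if and only if Q_G can be made 3-edge-connected by doubling a set F of edges with w(F) ≤ k. -/

import Mathlib

open scoped Classical

/-- Number of undirected edges with exactly one endpoint in `X`. -/
noncomputable def edgesCross {V : Type*} (E : Multiset (V × V)) (X : Finset V) : ℕ :=
  (E.filter fun e => (e.1 ∈ X ∧ e.2 ∉ X) ∨ (e.2 ∈ X ∧ e.1 ∉ X)).card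

/-- Local edge-connectivity between `u` and `v` in the multigraph `E`: the minimum
size of a cut separating `u` from `v` (by Menger, the maximum number of pairwise
edge-disjoint `u`-`v` paths). -/
noncomputable def lam {V : Type*} (E : Multiset (V × V)) (u v : V) : ℕ :=
  sInf {n | ∃ X : Finset V, u ∈ X ∧ v ∉ X ∧ edgesCross E X = n}

/-- A multigraph is `m`-edge-connected. -/
def EdgeConn {V : Type*} [Fintype V] (m : ℕ) (E : Multiset (V × V)) : Prop :=
  ∀ X : Finset V, X.Nonempty → X ≠ Finset.univ → m ≤ edgesCross E X

/-!
Every cut separating two equivalent vertices already has at least three edges of `G`, so doubling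
an edge inside a class is useless, and a doubled graph is 3-edge-connected as soon as its cuts
that are unions of classes are. Those cuts are exactly the preimages of the cuts of `Q_G`, and
they are crossed by the same edges.
-/

open Finset

lemma Multiset.sum_le_sum_of_le {α : Type*} [AddCommMonoid α] [PartialOrder α]
    [CanonicallyOrderedAdd α] {s t : Multiset α} (h : s ≤ t) : s.sum ≤ t.sum := by
  obtain ⟨u, rfl⟩ := Multiset.le_iff_exists_add.mp h
  rw [Multiset.sum_add]
  exact le_self_add

section EdgeCuts

variable {V : Type*}

lemma edgesCross_mono {M N : Multiset (V × V)} (h : M ≤ N) (X : Finset V) :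
    edgesCross M X ≤ edgesCross N X :=
  Multiset.card_le_card (Multiset.filter_le_filter _ h)

lemma lam_le_edgesCross (M : Multiset (V × V)) {u v : V} {X : Finset V}
    (hu : u ∈ X) (hv : v ∉ X) : lam M u v ≤ edgesCross M X :=
  Nat.sInf_le ⟨X, hu, hv, rfl⟩

lemma lam_self (M : Multiset (V × V)) (u : V) : lam M u u = 0 :=
  Nat.sInf_eq_zero.mpr <| .inr <| Set.eq_empty_of_forall_notMem fun _ ⟨_, hu, hu', _⟩ => hu' hu

lemma lam_mono {M N : Multiset (V × V)} (h : M ≤ N) (u v : V) : lam M u v ≤ lam N u v := by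
  by_cases huv : u = v
  · simp [huv, lam_self]
  · refine le_csInf ⟨_, {u}, mem_singleton_self u, by simpa [eq_comm] using huv, rfl⟩ ?_
    rintro _ ⟨X, hu, hv, rfl⟩
    exact (lam_le_edgesCross M hu hv).trans (edgesCross_mono h X)

lemma edgesCross_map {W : Type*} (f : V → W) (M : Multiset (V × V)) (Y : Finset W)
    (X : Finset V) (h : ∀ v, f v ∈ Y ↔ v ∈ X) :
    edgesCross (M.map fun e => (f e.1, f e.2)) Y = edgesCross M X := by
  rw [edgesCross, edgesCross, Multiset.filter_map, Multiset.card_map]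
  exact congrArg Multiset.card (Multiset.filter_congr fun e _ => by simp [h])

lemma edgesCross_filter_of_imp (p : V × V → Prop) [DecidablePred p] (M : Multiset (V × V))
    (X : Finset V) (h : ∀ e ∈ M, ((e.1 ∈ X ∧ e.2 ∉ X) ∨ (e.2 ∈ X ∧ e.1 ∉ X)) → p e) :
    edgesCross (M.filter p) X = edgesCross M X := by
  rw [edgesCross, edgesCross, Multiset.filter_filter]
  exact congrArg Multiset.card
    (Multiset.filter_congr fun e he => ⟨And.left, fun hc => ⟨hc, h e he hc⟩⟩)

end EdgeCuts

section Quotient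

variable {V : Type*} (s : Setoid V)

/-- The edge multiset of `Q_G`. -/
noncomputable def quotientEdges (M : Multiset (V × V)) : Multiset (Quotient s × Quotient s) :=
  (M.filter fun e => ¬ s.r e.1 e.2).map fun e => (Quotient.mk s e.1, Quotient.mk s e.2)

lemma quotientEdges_add (M N : Multiset (V × V)) :
    quotientEdges s (M + N) = quotientEdges s M + quotientEdges s N := by
  rw [quotientEdges, Multiset.filter_add, Multiset.map_add]
  rfl

lemma quotientEdges_eq_map {M : Multiset (V × V)} (hM : ∀ e ∈ M, ¬ s.r e.1 e.2) :
    quotientEdges s M = M.map fun e => (Quotient.mk s e.1, Quotient.mk s e.2) := by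
  rw [quotientEdges, Multiset.filter_eq_self.mpr hM]

variable [Fintype V]

lemma edgesCross_quotientEdges (M : Multiset (V × V)) (Y : Finset (Quotient s)) :
    edgesCross (quotientEdges s M) Y = edgesCross M {v | Quotient.mk s v ∈ Y} := by
  rw [quotientEdges, edgesCross_map _ _ Y {v | Quotient.mk s v ∈ Y} fun v => by simp,
    edgesCross_filter_of_imp]
  rintro e - hcross hrel
  simp only [mem_filter, mem_univ, true_and, Quotient.sound hrel] at hcross
  tauto

lemma EdgeConn.quotient {m : ℕ} {M : Multiset (V × V)} (hM : EdgeConn m M) :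
    EdgeConn m (quotientEdges s M) := by
  intro Y ⟨q, hq⟩ hY
  obtain ⟨q', hq'⟩ := not_forall.mp (mt eq_univ_iff_forall.mpr hY)
  induction q using Quotient.inductionOn
  induction q' using Quotient.inductionOn
  rw [edgesCross_quotientEdges]
  refine hM _ ⟨_, by simpa using hq⟩ fun h => hq' ?_
  simpa using h.ge (mem_univ _)

lemma EdgeConn.of_quotient {m : ℕ} {M : Multiset (V × V)}
    (hrel : ∀ u v, s.r u v → u ≠ v → m ≤ lam M u v) (hQ : EdgeConn m (quotientEdges s M)) :
    EdgeConn m M := by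
  intro X hX hXuniv
  by_cases hsat : ∀ u ∈ X, ∀ v, s.r u v → v ∈ X
  · have hpre : ({v | Quotient.mk s v ∈ X.image (Quotient.mk s)} : Finset V) = X := by
      ext v
      simp only [mem_filter, mem_univ, true_and, mem_image]
      exact ⟨fun ⟨u, hu, huv⟩ => hsat u hu v (Quotient.exact huv), fun hv => ⟨v, hv, rfl⟩⟩
    have hYuniv : X.image (Quotient.mk s) ≠ univ := by
      obtain ⟨v, hv⟩ := not_forall.mp (mt eq_univ_iff_forall.mpr hXuniv)
      intro h
      exact hv (hpre.le (by simp [h]))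
    have hY := hQ _ (hX.image _) hYuniv
    rwa [edgesCross_quotientEdges, hpre] at hY
  · push Not at hsat
    obtain ⟨u, hu, v, huv, hv⟩ := hsat
    exact (hrel u v huv (ne_of_mem_of_not_mem hu hv)).trans (lam_le_edgesCross M hu hv)

end Quotient

theorem stmt_12_general {V : Type*} [Fintype V] (E : Multiset (V × V))
    (w : V × V → NNReal) (k : NNReal)
    (s : Setoid V) (hs : ∀ u v : V, s.r u v ↔ (u = v ∨ 3 ≤ lam E u v)) :
    (∃ F ≤ E, (F.map w).sum ≤ k ∧ EdgeConn 3 (E + F)) ↔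
      (∃ F ≤ E.filter (fun e => ¬ s.r e.1 e.2), (F.map w).sum ≤ k ∧
        EdgeConn 3
          ((E.filter fun e => ¬ s.r e.1 e.2).map
              (fun e => (Quotient.mk s e.1, Quotient.mk s e.2))
            + F.map fun e => (Quotient.mk s e.1, Quotient.mk s e.2))) := by
  constructor
  · rintro ⟨F, hFE, hFw, hF3⟩
    refine ⟨F.filter _, Multiset.filter_le_filter _ hFE,
      (Multiset.sum_le_sum_of_le (Multiset.map_le_map (Multiset.filter_le _ _))).trans hFw, ?_⟩
    change EdgeConn 3 (quotientEdges s E + quotientEdges s F)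
    rw [← quotientEdges_add]
    exact hF3.quotient s
  · rintro ⟨F, hFE, hFw, hQ⟩
    refine ⟨F, hFE.trans (Multiset.filter_le _ _), hFw, ?_⟩
    have hFcross : ∀ e ∈ F, ¬ s.r e.1 e.2 := fun e he =>
      (Multiset.mem_filter.mp (Multiset.mem_of_le hFE he)).2
    rw [← quotientEdges_eq_map s hFcross, ← quotientEdges, ← quotientEdges_add] at hQ
    refine hQ.of_quotient s fun u v huv hne => ?_
    exact (((hs u v).mp huv).resolve_left hne).trans (lam_mono (Multiset.le_add_right E F) u v)

/-- For a 2-edge-connected weighted graph `G` and its quotient `Q_G` by the relation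
`u ∼ v ↔ λ_G(u,v) ≥ 3` (edges of `Q_G` being the edges of `G` joining distinct classes,
with induced weights): `G` can be made 3-edge-connected by doubling an edge set of
weight at most `k` iff `Q_G` can. -/
theorem stmt_12 {V : Type*} [Fintype V] (E : Multiset (V × V))
    (w : V × V → NNReal) (k : NNReal)
    (h2ec : ∀ u v : V, u ≠ v → 2 ≤ lam E u v)
    (s : Setoid V) (hs : ∀ u v : V, s.r u v ↔ (u = v ∨ 3 ≤ lam E u v)) :
    (∃ F ≤ E, (F.map w).sum ≤ k ∧ EdgeConn 3 (E + F)) ↔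
      (∃ F ≤ E.filter (fun e => ¬ s.r e.1 e.2), (F.map w).sum ≤ k ∧
        EdgeConn 3
          ((E.filter fun e => ¬ s.r e.1 e.2).map
              (fun e => (Quotient.mk s e.1, Quotient.mk s e.2))
            + F.map fun e => (Quotient.mk s e.1, Quotient.mk s e.2))) :=
  stmt_12_general E w k s hs
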